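/- Conjugation by even powers of R preserves the state set while conjugation by odd powers maps it onto the effect set: for every even m ∈ ℤ₈, {R^m ω (R^m)† : ω ∈ Ω} = Ω, and for every odd m ∈ ℤ₈, {R^m ω (R^m)† : ω ∈ Ω} = {R ω R† : ω ∈ Ω}. -/
import Mathlib


open Matrix Kronecker Complex

noncomputable section

/-- The Pauli matrices indexed by ℤ₄. -/
def pauli : ZMod 4 → Matrix (Fin 2) (Fin 2) ℂ := fun μ =>
  if μ = 0 then 1
  else if μ = 1 then !![0, 1; 1, 0]
  else if μ = 2 then !![0, -Complex.I; Complex.I, 0]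
  else !![1, 0; 0, -1]

/-- The rotation R = diag(e^{-iπ/8}, e^{iπ/8}). -/
def R : Matrix (Fin 2) (Fin 2) ℂ :=
  !![Complex.exp (-(Real.pi / 8 : ℝ) * Complex.I), 0;
     0, Complex.exp ((Real.pi / 8 : ℝ) * Complex.I)]

/-- The Bell vector |Φ⁺⟩ = (|00⟩+|11⟩)/√2. -/
def bell : Fin 2 × Fin 2 → ℂ := fun p =>
  if p.1 = p.2 then ((Real.sqrt 2 : ℝ) : ℂ)⁻¹ else 0

/-- The Bell projector P_Φ = |Φ⁺⟩⟨Φ⁺|. -/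
def PΦ : Matrix (Fin 2 × Fin 2) (Fin 2 × Fin 2) ℂ :=
  Matrix.of fun p q => bell p * (starRingEnd ℂ) (bell q)

/-- Φ⁺_{μ,m} = ((σ_μ R^m)† ⊗ I) P_Φ ((σ_μ R^m) ⊗ I). -/
def PhiProj (μ : ZMod 4) (m : ZMod 8) : Matrix (Fin 2 × Fin 2) (Fin 2 × Fin 2) ℂ :=
  ((pauli μ * R ^ m.val)ᴴ ⊗ₖ (1 : Matrix (Fin 2) (Fin 2) ℂ)) * PΦ *
    ((pauli μ * R ^ m.val) ⊗ₖ (1 : Matrix (Fin 2) (Fin 2) ℂ))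

/-- r = 2^{1/4}. -/
def r : ℝ := (2 : ℝ) ^ ((1 : ℝ) / 4)

/-- The stretched stabilizer states Ω. -/
def Ω : Set (Matrix (Fin 2) (Fin 2) ℂ) :=
  { (1 / 2 : ℂ) • (1 + (r : ℂ) • pauli 1),
    (1 / 2 : ℂ) • (1 - (r : ℂ) • pauli 1),
    (1 / 2 : ℂ) • (1 + (r : ℂ) • pauli 2),
    (1 / 2 : ℂ) • (1 - (r : ℂ) • pauli 2),
    (1 / 2 : ℂ) • (1 + pauli 3),
    (1 / 2 : ℂ) • (1 - pauli 3) }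

/-- The set Φ of entangled states/effects. -/
def PhiSet : Set (Matrix (Fin 2 × Fin 2) (Fin 2 × Fin 2) ℂ) :=
  { Q | ∃ μ : ZMod 4, ∃ m : ZMod 8, m ∈ ({1, 3, 5, 7} : Set (ZMod 8)) ∧ Q = PhiProj μ m }

/-- Place a 4×4 matrix `Q` on tensor factors (2,3) of (ℂ²)⊗⁴ (identity on factors 1 and 4). -/
def mid (Q : Matrix (Fin 2 × Fin 2) (Fin 2 × Fin 2) ℂ) :
    Matrix ((Fin 2 × Fin 2) × (Fin 2 × Fin 2)) ((Fin 2 × Fin 2) × (Fin 2 × Fin 2)) ℂ :=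
  Matrix.of fun p q =>
    (1 : Matrix (Fin 2) (Fin 2) ℂ) p.1.1 q.1.1 *
      Q (p.1.2, p.2.1) (q.1.2, q.2.1) *
      (1 : Matrix (Fin 2) (Fin 2) ℂ) p.2.2 q.2.2

/-- Partial trace over the first tensor factor of ℂ² ⊗ ℂ². -/
def ptr1 (M : Matrix (Fin 2 × Fin 2) (Fin 2 × Fin 2) ℂ) : Matrix (Fin 2) (Fin 2) ℂ :=
  Matrix.of fun i j => ∑ a : Fin 2, M (a, i) (a, j)

/-- Partial trace over the second tensor factor of ℂ² ⊗ ℂ². -/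
def ptr2 (M : Matrix (Fin 2 × Fin 2) (Fin 2 × Fin 2) ℂ) : Matrix (Fin 2) (Fin 2) ℂ :=
  Matrix.of fun i j => ∑ a : Fin 2, M (i, a) (j, a)

/-- Partial trace over the second and third tensor factors of (ℂ²)⊗⁴. -/
def ptr23
    (M : Matrix ((Fin 2 × Fin 2) × (Fin 2 × Fin 2)) ((Fin 2 × Fin 2) × (Fin 2 × Fin 2)) ℂ) :
    Matrix (Fin 2 × Fin 2) (Fin 2 × Fin 2) ℂ :=
  Matrix.of fun p q => ∑ b : Fin 2, ∑ c : Fin 2, M ((p.1, b), (c, p.2)) ((q.1, b), (c, q.2))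

end

lemma pauli1 : pauli 1 = !![0, 1; 1, 0] := by
  simp [pauli, (by decide : (1:ZMod 4) ≠ 0)]
lemma pauli2 : pauli 2 = !![0, -Complex.I; Complex.I, 0] := by
  simp [pauli, (by decide : (2:ZMod 4) ≠ 0), (by decide : (2:ZMod 4) ≠ 1)]
lemma pauli3 : pauli 3 = !![1, 0; 0, -1] := by
  simp [pauli, (by decide : (3:ZMod 4) ≠ 0), (by decide : (3:ZMod 4) ≠ 1), (by decide : (3:ZMod 4) ≠ 2)]

noncomputable def ea : ℂ := Complex.exp (-(Real.pi / 8 : ℝ) * Complex.I)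
noncomputable def eb : ℂ := Complex.exp ((Real.pi / 8 : ℝ) * Complex.I)
lemma R_eq : R = !![ea, 0; 0, eb] := rfl
lemma conj_ea : (starRingEnd ℂ) ea = eb := by
  rw [ea, eb, ← Complex.exp_conj]; congr 1; simp [Complex.conj_ofReal, map_ofNat]
lemma conj_eb : (starRingEnd ℂ) eb = ea := by
  rw [ea, eb, ← Complex.exp_conj]; congr 1; simp [Complex.conj_ofReal, map_ofNat]
lemma ea_mul_eb : ea * eb = 1 := by rw [ea, eb, ← Complex.exp_add]; simp
lemma ea4 : ea ^ 4 = -Complex.I := by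
  rw [ea, ← Complex.exp_nat_mul]
  have : ((4:ℕ):ℂ) * (-(Real.pi/8:ℝ) * Complex.I) = (-(Real.pi/2) : ℝ) * Complex.I := by
    push_cast; ring
  rw [this, Complex.exp_mul_I]
  push_cast [← Complex.ofReal_cos, ← Complex.ofReal_sin]
  simp [Real.cos_pi_div_two, Real.sin_pi_div_two]
lemma eb4 : eb ^ 4 = Complex.I := by
  rw [eb, ← Complex.exp_nat_mul]
  have : ((4:ℕ):ℂ) * ((Real.pi/8:ℝ) * Complex.I) = (Real.pi/2 : ℝ) * Complex.I := by
    push_cast; ring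
  rw [this, Complex.exp_mul_I]
  push_cast [← Complex.ofReal_cos, ← Complex.ofReal_sin]
  simp [Real.cos_pi_div_two, Real.sin_pi_div_two]

lemma c1 : R^2 * pauli 1 * (R^2)ᴴ = pauli 2 := by
  ext i j
  fin_cases i <;> fin_cases j <;>
    simp [R_eq, pauli1, pauli2, pow_two, mul_apply, Fin.sum_univ_two, conjTranspose_apply, conj_ea, conj_eb] <;>
    (first
      | linear_combination ea4
      | linear_combination eb4
      | linear_combination Complex.I*ea4 - Complex.I_sq
      | linear_combination Complex.I*eb4 + Complex.I_sq
      | linear_combination (ea*eb + 1) * ea_mul_eb)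

lemma c2 : R^2 * pauli 2 * (R^2)ᴴ = -pauli 1 := by
  ext i j
  fin_cases i <;> fin_cases j <;>
    simp [R_eq, pauli1, pauli2, pow_two, mul_apply, Fin.sum_univ_two, conjTranspose_apply, conj_ea, conj_eb] <;>
    (first
      | linear_combination ea4
      | linear_combination eb4
      | linear_combination Complex.I*ea4 - Complex.I_sq
      | linear_combination Complex.I*eb4 + Complex.I_sq
      | linear_combination (ea*eb + 1) * ea_mul_eb)

lemma c3 : R^2 * pauli 3 * (R^2)ᴴ = pauli 3 := by
  ext i j
  fin_cases i <;> fin_cases j <;>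
    simp [R_eq, pauli3, pow_two, mul_apply, Fin.sum_univ_two, conjTranspose_apply, conj_ea, conj_eb] <;>
    (first
      | linear_combination ea4
      | linear_combination eb4
      | linear_combination Complex.I*ea4 - Complex.I_sq
      | linear_combination Complex.I*eb4 + Complex.I_sq
      | linear_combination (ea*eb + 1) * ea_mul_eb)

lemma c0 : R^2 * (R^2)ᴴ = 1 := by
  ext i j
  fin_cases i <;> fin_cases j <;>
    simp [R_eq, pow_two, mul_apply, Fin.sum_univ_two, conjTranspose_apply, conj_ea, conj_eb, one_apply] <;>
    (first
      | linear_combination ea4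
      | linear_combination eb4
      | linear_combination Complex.I*ea4 - Complex.I_sq
      | linear_combination Complex.I*eb4 + Complex.I_sq
      | linear_combination (ea*eb + 1) * ea_mul_eb)

lemma c1s : R^2 * ((r:ℂ) • pauli 1) * (R^2)ᴴ = (r:ℂ) • pauli 2 := by
  rw [Matrix.mul_smul, Matrix.smul_mul, c1]
lemma c2s : R^2 * ((r:ℂ) • pauli 2) * (R^2)ᴴ = -((r:ℂ) • pauli 1) := by
  rw [Matrix.mul_smul, Matrix.smul_mul, c2, smul_neg]

lemma conj_add (P : Matrix (Fin 2) (Fin 2) ℂ) :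
    R^2 * ((1/2:ℂ) • (1 + P)) * (R^2)ᴴ = (1/2:ℂ) • (1 + R^2 * P * (R^2)ᴴ) := by
  have h : R^2 * ((1/2:ℂ) • (1 + P)) * (R^2)ᴴ
      = (1/2:ℂ) • (R^2 * (R^2)ᴴ + R^2 * P * (R^2)ᴴ) := by
    simp only [Matrix.mul_add, Matrix.add_mul, Matrix.mul_smul, Matrix.smul_mul, mul_one]
  rw [h, c0]

lemma conj_sub (P : Matrix (Fin 2) (Fin 2) ℂ) :
    R^2 * ((1/2:ℂ) • (1 - P)) * (R^2)ᴴ = (1/2:ℂ) • (1 - R^2 * P * (R^2)ᴴ) := by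
  have h : R^2 * ((1/2:ℂ) • (1 - P)) * (R^2)ᴴ
      = (1/2:ℂ) • (R^2 * (R^2)ᴴ - R^2 * P * (R^2)ᴴ) := by
    simp only [Matrix.mul_sub, Matrix.sub_mul, Matrix.mul_smul, Matrix.smul_mul, mul_one]
  rw [h, c0]

lemma f_img : (fun ω => R^2 * ω * (R^2)ᴴ) '' Ω = Ω := by
  unfold Ω
  repeat rw [Set.image_insert_eq]
  rw [Set.image_singleton]
  simp only [conj_add, conj_sub, c1s, c2s, c3]
  rw [show (1 : Matrix (Fin 2) (Fin 2) ℂ) + -((r:ℂ) • pauli 1) = 1 - (r:ℂ) • pauli 1 from (sub_eq_add_neg _ _).symm,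
      show (1 : Matrix (Fin 2) (Fin 2) ℂ) - -((r:ℂ) • pauli 1) = 1 + (r:ℂ) • pauli 1 from sub_neg_eq_add _ _]
  ext x
  simp only [Set.mem_insert_iff, Set.mem_singleton_iff]
  tauto

lemma img_mul (A B : Matrix (Fin 2) (Fin 2) ℂ) (S : Set (Matrix (Fin 2) (Fin 2) ℂ)) :
    (fun ω => (A*B) * ω * (A*B)ᴴ) '' S
      = (fun ω => A*ω*Aᴴ) '' ((fun ω => B*ω*Bᴴ) '' S) := by
  rw [← Set.image_comp]
  congr 1
  funext ω
  simp [Matrix.conjTranspose_mul, mul_assoc]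

lemma even_img (k : ℕ) : (fun ω => R^(2*k) * ω * (R^(2*k))ᴴ) '' Ω = Ω := by
  induction k with
  | zero => simp
  | succ n ih =>
      have hp : R^(2*(n+1)) = R^2 * R^(2*n) := by
        rw [← pow_add]; ring_nf
      rw [hp, img_mul, ih, f_img]

/-- Conjugation by even powers of R preserves the state set Ω,
while conjugation by odd powers maps it onto the effect set {RωR† : ω ∈ Ω}. -/
theorem stmt_10 (m : ZMod 8) :
    (Even m.val → (fun ω => R ^ m.val * ω * (R ^ m.val)ᴴ) '' Ω = Ω) ∧
    (Odd m.val → (fun ω => R ^ m.val * ω * (R ^ m.val)ᴴ) '' Ω = (fun ω => R * ω * Rᴴ) '' Ω) := by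
  constructor
  · rintro ⟨k, hk⟩
    have hk2 : m.val = 2 * k := by omega
    rw [hk2]; exact even_img k
  · rintro ⟨k, hk⟩
    rw [hk]
    have hp : R^(2*k+1) = R * R^(2*k) := by rw [pow_succ']
    rw [hp, img_mul, even_img k]
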